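/- arXiv:1401.2249 — 3 statements merged into one kernel-verified Lean document; each statement's English description precedes it below -/
import Mathlib

section
/- Let K ⊆ ℂ^n be a compact set, let P : ℂ^n → ℂ^k be a polynomial map, and let F = P|_K. Assume that [w_1,…,w_k]_{F(K)} = C(F(K),ℂ), where w_1,…,w_k are the coordinate functions on ℂ^k, and that [z_1,…,z_n]_{K ∩ P^{-1}(w)} = C(K ∩ P^{-1}(w), ℂ) for every w ∈ ℂ^k. Then [z_1,…,z_n]_K = C(K,ℂ). -/
noncomputable def genAlg {X : Type*} [TopologicalSpace X] (S : Set C(X, ℂ)) : Set C(X, ℂ) :=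
  closure ((Algebra.adjoin ℂ S : Subalgebra ℂ C(X, ℂ)) : Set C(X, ℂ))

/-- Generators of the algebra `[z₁,…,z_m]_M`: the coordinate functions. -/
def coordGens {m : ℕ} (M : Set (Fin m → ℂ)) : Set C(M, ℂ) :=
  {g | ∃ i : Fin m, ∀ z : M, g z = (z : Fin m → ℂ) i}

/-!
Let `F = P|_K : K → Y = P(K)`. The closure `A` of the polynomials on `K` is a closed subalgebra of
`C(K)` containing `g ∘ F` for every `g ∈ C(Y)` (approximate `g` by polynomials in `w`, and compose
with the polynomial map `P`). Given `f ∈ C(K)` and `ε > 0`, choose for each `y ∈ Y` a polynomial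
`q_y` that is `ε`-close to `f` on the fiber `F⁻¹(y)`; since `F` is a closed map, it stays `ε`-close
on `F⁻¹(U_y)` for a neighbourhood `U_y` of `y`. A partition of unity `(φ_i)` on `Y` subordinate to
finitely many `U_{y_i}` then gives `∑ (φ_i ∘ F) q_{y_i} ∈ A`, which is `ε`-close to `f` everywhere,
being pointwise a convex combination of values `ε`-close to `f`.
-/

open Set Filter Topology MvPolynomial

theorem PartitionOfUnity.dist_sum_smul_lt {ι Y E : Type*} [Fintype ι] [TopologicalSpace Y]
    [SeminormedAddCommGroup E] [NormedSpace ℝ E] {s : Set Y} (φ : PartitionOfUnity ι Y s)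
    {y : Y} (hy : y ∈ s) {c : E} {v : ι → E} {ε : ℝ} (h : ∀ i, φ i y ≠ 0 → dist c (v i) < ε) :
    dist c (∑ i, φ i y • v i) < ε := by
  have := φ.finsum_smul_mem_convex (g := fun i _ => v i) hy
    (fun i hi => Metric.mem_ball'.2 (h i hi)) (convex_ball c ε)
  rwa [finsum_eq_sum_of_fintype, Metric.mem_ball'] at this

theorem Subalgebra.eq_top_of_forall_fiber_approx {𝕜 X Y : Type*} [RCLike 𝕜]
    [TopologicalSpace X] [CompactSpace X] [TopologicalSpace Y] [CompactSpace Y] [T2Space Y]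
    (A : Subalgebra 𝕜 C(X, 𝕜))
    (hA : IsClosed (A : Set C(X, 𝕜))) (F : C(X, Y)) (hpull : ∀ g : C(Y, 𝕜), g.comp F ∈ A)
    (hfib : ∀ (f : C(X, 𝕜)) (y : Y) (ε : ℝ), 0 < ε →
      ∃ a ∈ A, ∀ x, F x = y → dist (f x) (a x) < ε) :
    A = ⊤ := by
  refine eq_top_iff.2 fun f _ => ?_
  rw [← SetLike.mem_coe, ← hA.closure_eq, Metric.mem_closure_iff]
  intro ε hε
  choose a haA ha using fun y => hfib f y ε hε
  set U : Y → Set Y := fun y => interior {y' | ∀ x, F x = y' → dist (f x) (a y x) < ε}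
  have hU : ∀ y, U y ∈ 𝓝 y := fun y => interior_mem_nhds.2 <|
    F.continuous.isClosedMap.eventually_nhds_fiber (p := fun x => dist (f x) (a y x) < ε) y
      fun x hx => (isOpen_lt (by fun_prop) continuous_const).mem_nhds (ha y x hx)
  obtain ⟨t, -, ht⟩ := isCompact_univ.elim_nhds_subcover U fun y _ => hU y
  obtain ⟨φ, hφ⟩ := PartitionOfUnity.exists_isSubordinate isClosed_univ (fun i : t => U i)
    (fun _ => isOpen_interior) (by simpa [iUnion_subtype] using ht)
  let ofRealCM : C(ℝ, 𝕜) := ⟨(↑), RCLike.continuous_ofReal⟩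
  refine ⟨∑ i : t, ((ofRealCM.comp (φ i)).comp F) * a i,
    Subalgebra.sum_mem _ fun i _ => Subalgebra.mul_mem _ (hpull _) (haA i), ?_⟩
  rw [ContinuousMap.dist_lt_iff hε]
  intro x
  simpa [ofRealCM, RCLike.real_smul_eq_coe_mul] using φ.dist_sum_smul_lt (mem_univ (F x))
    fun i hi => interior_subset (hφ i (subset_closure hi)) x rfl

section CoordinateFunctions

variable {σ τ R : Type*} [CommSemiring R] [TopologicalSpace R] [IsTopologicalSemiring R]

def coordFun (M : Set (σ → R)) (i : σ) : C(M, R) :=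
  ⟨fun z => (z : σ → R) i, (continuous_apply i).comp continuous_subtype_val⟩

theorem aeval_coordFun_apply (M : Set (σ → R)) (q : MvPolynomial σ R) (z : M) :
    aeval (coordFun M) q z = eval (z : σ → R) q := by
  rw [← ContinuousMap.evalAlgHom_apply R, comp_aeval_apply, ← coe_aeval_eq_eval]
  rfl

theorem comp_aeval_coordFun {M : Set (σ → R)} {N : Set (τ → R)} (p : τ → MvPolynomial σ R)
    (Φ : C(M, N)) (hΦ : ∀ z i, (Φ z : τ → R) i = eval (z : σ → R) (p i))
    (q : MvPolynomial τ R) :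
    (aeval (coordFun N) q).comp Φ = aeval (coordFun M) (bind₁ p q) := by
  ext z
  have hΦz : (Φ z : τ → R) = fun i => eval (z : σ → R) (p i) := funext (hΦ z)
  simpa [aeval_coordFun_apply, hΦz] using (eval₂Hom_bind₁ (RingHom.id R) (z : σ → R) p q).symm

theorem comp_mem_closure_range_aeval_coordFun {M : Set (σ → R)} {N : Set (τ → R)}
    (p : τ → MvPolynomial σ R) (Φ : C(M, N))
    (hΦ : ∀ z i, (Φ z : τ → R) i = eval (z : σ → R) (p i)) {g : C(N, R)}
    (hg : g ∈ closure (range (aeval (R := R) (coordFun N)))) :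
    g.comp Φ ∈ closure (range (aeval (R := R) (coordFun M))) :=
  map_mem_closure (f := fun g : C(N, R) => g.comp Φ) (ContinuousMap.continuous_precomp Φ) hg <| by
    rintro _ ⟨q, rfl⟩
    exact ⟨bind₁ p q, (comp_aeval_coordFun p Φ hΦ q).symm⟩

end CoordinateFunctions

theorem coordGens_eq_range {m : ℕ} (M : Set (Fin m → ℂ)) : coordGens M = range (coordFun M) := by
  ext g
  simp only [coordGens, mem_range, ContinuousMap.ext_iff, coordFun, ContinuousMap.coe_mk]
  exact exists_congr fun i => forall_congr' fun z => eq_comm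

theorem genAlg_coordGens {m : ℕ} (M : Set (Fin m → ℂ)) :
    genAlg (coordGens M) = closure (range (aeval (R := ℂ) (coordFun M))) := by
  rw [genAlg, coordGens_eq_range, ← aeval_range, AlgHom.coe_range]

theorem exists_aeval_coordFun_dist_lt {m : ℕ} {M N : Set (Fin m → ℂ)} [CompactSpace M]
    (hMN : M ⊆ N) (hM : genAlg (coordGens M) = univ) (f : C(N, ℂ)) {ε : ℝ} (hε : 0 < ε) :
    ∃ q, ∀ z : N, (z : Fin m → ℂ) ∈ M → dist (f z) (aeval (R := ℂ) (coordFun N) q z) < ε := by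
  have hf : f.comp ⟨inclusion hMN, continuous_inclusion hMN⟩ ∈ genAlg (coordGens M) :=
    hM ▸ mem_univ _
  rw [genAlg_coordGens] at hf
  obtain ⟨_, ⟨q, rfl⟩, hq⟩ := Metric.mem_closure_iff.1 hf ε hε
  refine ⟨q, fun z hz => ?_⟩
  calc dist (f z) (aeval (coordFun N) q z)
      = dist (f.comp ⟨inclusion hMN, continuous_inclusion hMN⟩ ⟨z, hz⟩)
          (aeval (coordFun M) q ⟨z, hz⟩) := by simp only [aeval_coordFun_apply]; rfl
    _ ≤ _ := ContinuousMap.dist_apply_le_dist _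
    _ < ε := hq

theorem stmt9 {n k : ℕ} (K : Set (Fin n → ℂ)) (hK : IsCompact K)
    (p : Fin k → MvPolynomial (Fin n) ℂ) (P : (Fin n → ℂ) → (Fin k → ℂ))
    (hP : ∀ z i, P z i = MvPolynomial.eval z (p i))
    (hCF : genAlg (coordGens (P '' K)) = Set.univ)
    (hfib : ∀ w : Fin k → ℂ, genAlg (coordGens (K ∩ P ⁻¹' {w})) = Set.univ) :
    genAlg (coordGens K) = Set.univ := by
  have hPc : Continuous P := continuous_pi fun i => by
    simpa only [hP] using (p i).continuous_eval
  have := isCompact_iff_compactSpace.1 hK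
  have := isCompact_iff_compactSpace.1 (hK.image hPc)
  let F : C(K, P '' K) := ⟨fun z => ⟨P z, z, z.2, rfl⟩, by fun_prop⟩
  have hA := Subalgebra.eq_top_of_forall_fiber_approx _
    (Subalgebra.isClosed_topologicalClosure (aeval (R := ℂ) (coordFun K)).range) F ?pullback ?fiber
  · simpa [genAlg_coordGens] using congrArg SetLike.coe hA
  case pullback =>
    intro g
    refine comp_mem_closure_range_aeval_coordFun p F (fun z i => hP z i) ?_
    simp only [← genAlg_coordGens, hCF, mem_univ]
  case fiber =>
    intro f y ε hε
    have := isCompact_iff_compactSpace.1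
      (hK.inter_right (isClosed_singleton.preimage hPc) : IsCompact (K ∩ P ⁻¹' {(y : Fin k → ℂ)}))
    obtain ⟨q, hq⟩ := exists_aeval_coordFun_dist_lt inter_subset_left (hfib y) f hε
    exact ⟨_, Subalgebra.le_topologicalClosure _ ⟨q, rfl⟩,
      fun z hz => hq z ⟨z.2, congrArg Subtype.val hz⟩⟩
end

section
/- Let c ∈ ℂ with |c| = 1, let K ⊆ Γ be a closed set, and let C be a closed subset of the circle {(z_1,z_2) ∈ Γ : z_1 = c}. If K ∪ C does not contain the full circle {(z_1,z_2) ∈ Γ : z_1 = c}, then (K ∪ C)^̂ = K̂ ∪ C. -/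
noncomputable def polyHull {m : ℕ} (K : Set (Fin m → ℂ)) : Set (Fin m → ℂ) :=
  {z | ∀ p : MvPolynomial (Fin m) ℂ,
    ‖MvPolynomial.eval z p‖ ≤ sSup ((fun w => ‖MvPolynomial.eval w p‖) '' K)}

/-- The unit torus, the distinguished boundary of the bidisk. -/
def Torus : Set (Fin 2 → ℂ) := {z | ‖z 0‖ = 1 ∧ ‖z 1‖ = 1}

/-!
Let `z` be in the hull of `K ∪ C` but not in `C`. Each case produces a polynomial `φ` that
removes `C`, after which testing a polynomial `p` against `p φⁿ` shows `z ∈ K̂`. If `z₀ ≠ c`,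
take `φ = ζ₀ - c`, which vanishes on `C` but not at `z`. If `z₀ = c` (and `z ∉ K`), pick a point
`μ` of the circle over `c` outside `K ∪ C`, namely `z` itself if `|z₁| = 1`; the points of
`K ∪ C` near the circle over `c` then have `ζ₁` in a closed arc `B` missing a neighbourhood of
`μ₁`. Since `ℂ ∖ B` is connected, Runge's theorem gives a polynomial `g` with `g(z₁) = 1` and
`|g| ≤ 1/2` on `B`, and `φ = g(ζ₁) ((1 + c̄ ζ₀) / 2) ^ N` is at most `1` on `K`, at most `1/2`
on `C`, and `1` at `z`.
-/

open Metric Filter Topology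

section PolyHull

variable {m : ℕ}

theorem norm_eval_le_of_mem_polyHull {X : Set (Fin m → ℂ)} {z : Fin m → ℂ}
    (hz : z ∈ polyHull X) {p : MvPolynomial (Fin m) ℂ} {M : ℝ} (hM : 0 ≤ M)
    (hp : ∀ w ∈ X, ‖MvPolynomial.eval w p‖ ≤ M) : ‖MvPolynomial.eval z p‖ ≤ M :=
  (hz p).trans (Real.sSup_le (by rintro _ ⟨w, hw, rfl⟩; exact hp w hw) hM)

theorem mem_polyHull_of_forall {X : Set (Fin m → ℂ)} (hX : IsCompact X) {z : Fin m → ℂ}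
    (h : ∀ (p : MvPolynomial (Fin m) ℂ) (M : ℝ), 0 ≤ M →
      (∀ w ∈ X, ‖MvPolynomial.eval w p‖ ≤ M) → ‖MvPolynomial.eval z p‖ ≤ M) :
    z ∈ polyHull X := fun p =>
  h p _ (Real.sSup_nonneg (by rintro _ ⟨w, -, rfl⟩; positivity)) fun w hw =>
    le_csSup (hX.image (MvPolynomial.continuous_eval p).norm).bddAbove ⟨w, hw, rfl⟩

theorem subset_polyHull {X : Set (Fin m → ℂ)} (hX : IsCompact X) : X ⊆ polyHull X :=
  fun w hw => mem_polyHull_of_forall hX fun _ _ _ h => h w hw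

theorem polyHull_mono {X Y : Set (Fin m → ℂ)} (hY : IsCompact Y) (hXY : X ⊆ Y) :
    polyHull X ⊆ polyHull Y :=
  fun _ hz => mem_polyHull_of_forall hY fun _ _ hM h =>
    norm_eval_le_of_mem_polyHull hz hM fun w hw => h w (hXY hw)

theorem exists_norm_eval_le {X : Set (Fin m → ℂ)} (hX : IsCompact X)
    (p : MvPolynomial (Fin m) ℂ) : ∃ M, 0 ≤ M ∧ ∀ w ∈ X, ‖MvPolynomial.eval w p‖ ≤ M := by
  obtain ⟨M, hM⟩ := hX.exists_bound_of_continuousOn (MvPolynomial.continuous_eval p).continuousOn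
  exact ⟨max M 0, le_max_right _ _, fun w hw => (hM w hw).trans (le_max_left _ _)⟩

/-- Test `p` against `p * φ ^ n` and let `n → ∞`. -/
theorem mem_polyHull_of_peak {X Y : Set (Fin m → ℂ)} (hX : IsCompact X) (hY : IsCompact Y)
    {z : Fin m → ℂ} (hz : z ∈ polyHull (X ∪ Y)) {φ : MvPolynomial (Fin m) ℂ} {θ : ℝ}
    (hθ0 : 0 ≤ θ) (hθ1 : θ < 1) (hφX : ∀ w ∈ X, ‖MvPolynomial.eval w φ‖ ≤ 1)
    (hφY : ∀ w ∈ Y, ‖MvPolynomial.eval w φ‖ ≤ θ) (hφz : 1 ≤ ‖MvPolynomial.eval z φ‖) :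
    z ∈ polyHull X := by
  refine mem_polyHull_of_forall hX fun p M hM hpX => ?_
  obtain ⟨L, hL0, hpY⟩ := exists_norm_eval_le hY p
  have hbound (n : ℕ) : ‖MvPolynomial.eval z p‖ ≤ max M (L * θ ^ n) := calc
    ‖MvPolynomial.eval z p‖ ≤ ‖MvPolynomial.eval z p‖ * ‖MvPolynomial.eval z φ‖ ^ n :=
      le_mul_of_one_le_right (norm_nonneg _) (one_le_pow₀ hφz)
    _ = ‖MvPolynomial.eval z (p * φ ^ n)‖ := by simp
    _ ≤ max M (L * θ ^ n) := by
      refine norm_eval_le_of_mem_polyHull hz (le_max_of_le_left hM) fun w hw => ?_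
      rw [map_mul, map_pow, norm_mul, norm_pow]
      rcases hw with hw | hw
      · exact le_max_of_le_left <| (mul_le_of_le_one_right (norm_nonneg _)
          (pow_le_one₀ (norm_nonneg _) (hφX w hw))).trans (hpX w hw)
      · exact le_max_of_le_right <| mul_le_mul (hpY w hw)
          (pow_le_pow_left₀ (norm_nonneg _) (hφY w hw) n) (by positivity) hL0
  have hlim : Tendsto (fun n : ℕ => max M (L * θ ^ n)) atTop (𝓝 (max M (L * 0))) :=
    tendsto_const_nhds.max ((tendsto_pow_atTop_nhds_zero_of_lt_one hθ0 hθ1).const_mul L)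
  simpa [hM] using ge_of_tendsto' hlim hbound

/-- If `‖p z‖` exceeded the bound `M` of `p` on `X`, testing `p ^ n * φ` would give
`‖φ z‖ ≤ L (M / ‖p z‖) ^ n` for all `n`, where `L` bounds `φ` on `X`. -/
theorem mem_polyHull_of_eval_eq_zero {X Y : Set (Fin m → ℂ)} (hX : IsCompact X)
    {z : Fin m → ℂ} (hz : z ∈ polyHull (X ∪ Y)) {φ : MvPolynomial (Fin m) ℂ}
    (hφY : ∀ w ∈ Y, MvPolynomial.eval w φ = 0) (hφz : MvPolynomial.eval z φ ≠ 0) :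
    z ∈ polyHull X := by
  refine mem_polyHull_of_forall hX fun p M hM hpX => ?_
  obtain ⟨L, hL0, hφX⟩ := exists_norm_eval_le hX φ
  by_contra! hMp
  have hpz : 0 < ‖MvPolynomial.eval z p‖ := hM.trans_lt hMp
  have hbound (n : ℕ) : ‖MvPolynomial.eval z φ‖ ≤ L * (M / ‖MvPolynomial.eval z p‖) ^ n := by
    have h := norm_eval_le_of_mem_polyHull hz (p := p ^ n * φ) (M := M ^ n * L) (by positivity)
      fun w hw => by
        rw [map_mul, map_pow, norm_mul, norm_pow]
        rcases hw with hw | hw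
        · exact mul_le_mul (pow_le_pow_left₀ (norm_nonneg _) (hpX w hw) n) (hφX w hw)
            (norm_nonneg _) (by positivity)
        · rw [hφY w hw, norm_zero, mul_zero]; positivity
    rw [map_mul, map_pow, norm_mul, norm_pow] at h
    rw [div_pow, mul_div_assoc', le_div_iff₀ (pow_pos hpz n)]
    linarith
  have hlim : Tendsto (fun n : ℕ => L * (M / ‖MvPolynomial.eval z p‖) ^ n) atTop (𝓝 (L * 0)) :=
    (tendsto_pow_atTop_nhds_zero_of_lt_one (by positivity) ((div_lt_one hpz).2 hMp)).const_mul L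
  exact hφz (norm_le_zero_iff.mp (by simpa using ge_of_tendsto' hlim hbound))

end PolyHull

section Runge

open Polynomial

theorem isPreconnected_compl_closedBall_one : IsPreconnected (closedBall (0 : ℂ) 1)ᶜ := by
  have : (closedBall (0 : ℂ) 1)ᶜ = Complex.exp '' {w | 0 < w.re} := by
    ext ζ
    simp only [Set.mem_compl_iff, mem_closedBall, dist_zero_right, not_le, Set.mem_image]
    constructor
    · intro h
      have hζ : ζ ≠ 0 := by rintro rfl; norm_num at h
      exact ⟨Complex.log ζ, by simpa [Complex.log_re] using Real.log_pos h, Complex.exp_log hζ⟩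
    · rintro ⟨w, hw, rfl⟩
      simpa [Complex.norm_exp] using hw
  rw [this]
  exact (convex_halfSpace_re_gt 0).isPreconnected.image _ Complex.continuous_exp.continuousOn

theorem isPreconnected_compl_of_subset_sphere {B : Set ℂ} (hB : B ⊆ sphere 0 1) {l : ℂ}
    (hl : l ∈ sphere (0 : ℂ) 1) (hlB : l ∉ B) : IsPreconnected Bᶜ := by
  have hinner : IsPreconnected (Bᶜ ∩ closedBall 0 1) := by
    refine (convex_ball (0 : ℂ) 1).isPreconnected.subset_closure
      (fun ζ hζ => ⟨fun h => (hB h).not_lt hζ, ball_subset_closedBall hζ⟩) ?_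
    rw [closure_ball _ one_ne_zero]
    exact Set.inter_subset_right
  have houter : IsPreconnected (Bᶜ ∩ (ball 0 1)ᶜ) := by
    refine isPreconnected_compl_closedBall_one.subset_closure
      (fun ζ hζ => ⟨fun h => hζ (sphere_subset_closedBall (hB h)),
        fun h => hζ (ball_subset_closedBall h)⟩) ?_
    rw [closure_compl, interior_closedBall _ one_ne_zero]
    exact Set.inter_subset_right
  have hcover : closedBall (0 : ℂ) 1 ∪ (ball 0 1)ᶜ = Set.univ :=
    Set.eq_univ_of_forall fun ζ => (em (ζ ∈ ball (0 : ℂ) 1)).imp (ball_subset_closedBall ·) id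
  rw [← Set.inter_univ Bᶜ, ← hcover, Set.inter_union_distrib_left]
  exact hinner.union l ⟨hlB, sphere_subset_closedBall hl⟩
    ⟨hlB, fun h => (mem_sphere.mp hl).not_lt h⟩ houter

/-- A polynomial form of Runge's theorem. In the closure `S` of the polynomials in `C(B, ℂ)`,
the coordinate function has spectrum `B`, since `Bᶜ` is connected; so `w - ζ` has an inverse
in `S`, and `g = 1 - (w - ζ) q` for a polynomial `q` close to that inverse works. -/
theorem exists_eval_eq_one_norm_eval_le {B : Set ℂ} (hB : IsCompact B)
    (hBc : IsPreconnected Bᶜ) {w : ℂ} (hw : w ∉ B) {ε : ℝ} (hε : 0 < ε) :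
    ∃ g : ℂ[X], g.eval w = 1 ∧ ∀ ζ ∈ B, ‖g.eval ζ‖ ≤ ε := by
  have : CompactSpace B := isCompact_iff_compactSpace.mp hB
  set S := (polynomialFunctions B).topologicalClosure
  have : IsClosed (S : Set C(B, ℂ)) := (polynomialFunctions B).isClosed_topologicalClosure
  set f := toContinuousMapOnAlgHom B
  let x : S := ⟨f X, (polynomialFunctions B).le_topologicalClosure ⟨X, trivial, rfl⟩⟩
  have hx : spectrum ℂ (x : C(B, ℂ)) = B := by
    rw [ContinuousMap.spectrum_eq_range]
    ext ζ
    simp [x, f]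
  have hspec : spectrum ℂ x = B := by
    rw [Subalgebra.spectrum_eq_of_isPreconnected_compl S x (by rwa [hx]), hx]
  obtain ⟨u, hu⟩ := spectrum.notMem_iff.mp (hspec ▸ hw)
  set y : C(B, ℂ) := ((↑u⁻¹ : S) : C(B, ℂ))
  have hy : f (C w - X) * y = 1 := by
    have : ((u : S) : C(B, ℂ)) = f (C w - X) := by
      simp [hu, x, ← f.commutes w, Polynomial.algebraMap_eq]
    rw [← this, ← Subalgebra.coe_mul, Units.mul_inv, Subalgebra.coe_one]
  obtain ⟨_, ⟨q, -, rfl⟩, hq⟩ := Metric.mem_closure_iff.mp (u⁻¹ : Sˣ).val.2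
    (ε / (‖f (C w - X)‖ + 1)) (by positivity)
  refine ⟨1 - (C w - X) * q, by simp, fun ζ hζ => ?_⟩
  have key : f (1 - (C w - X) * q) = f (C w - X) * (y - f q) := by
    rw [mul_sub, hy, map_sub, map_one, map_mul]
  calc ‖(1 - (C w - X) * q).eval ζ‖ = ‖f (1 - (C w - X) * q) ⟨ζ, hζ⟩‖ := rfl
    _ ≤ ‖f (C w - X)‖ * ‖y - f q‖ := by
      rw [key]
      exact (ContinuousMap.norm_coe_le_norm _ _).trans (norm_mul_le _ _)
    _ ≤ ‖f (C w - X)‖ * (ε / (‖f (C w - X)‖ + 1)) := by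
      gcongr
      rw [← dist_eq_norm]
      exact hq.le
    _ ≤ ε := by
      rw [mul_div_assoc', div_le_iff₀ (by positivity)]
      nlinarith [norm_nonneg (f (C w - X))]

end Runge

section CirclePeak

open Polynomial

noncomputable def circlePeak (w : ℂ) : ℂ[X] := C (1 / 2) * (1 + C (starRingEnd ℂ w) * X)

variable {w : ℂ}

theorem eval_circlePeak_self (hw : ‖w‖ = 1) : (circlePeak w).eval w = 1 := by
  simp only [circlePeak, eval_mul, eval_C, eval_add, eval_one, eval_X, Complex.conj_mul', hw,
    Complex.ofReal_one, one_pow]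
  norm_num

theorem norm_eval_circlePeak_sq (hw : ‖w‖ = 1) {ζ : ℂ} (hζ : ‖ζ‖ = 1) :
    ‖(circlePeak w).eval ζ‖ ^ 2 = 1 - ‖ζ - w‖ ^ 2 / 4 := by
  have hw' : w.re * w.re + w.im * w.im = 1 := by
    rw [← Complex.normSq_apply, ← Complex.sq_norm, hw, one_pow]
  have hζ' : ζ.re * ζ.re + ζ.im * ζ.im = 1 := by
    rw [← Complex.normSq_apply, ← Complex.sq_norm, hζ, one_pow]
  simp only [circlePeak, Complex.sq_norm, Complex.normSq_apply, eval_mul, eval_C, eval_add,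
    eval_one, eval_X, Complex.mul_re, Complex.mul_im, Complex.add_re, Complex.add_im,
    Complex.sub_re, Complex.sub_im, Complex.one_re, Complex.one_im, Complex.conj_re,
    Complex.conj_im, Complex.div_ofNat_re, Complex.div_ofNat_im]
  linear_combination (1 + ζ.re * ζ.re + ζ.im * ζ.im) / 4 * hw' + (1/2 : ℝ) * hζ'

theorem norm_eval_circlePeak_le_one (hw : ‖w‖ = 1) {ζ : ℂ} (hζ : ‖ζ‖ = 1) :
    ‖(circlePeak w).eval ζ‖ ≤ 1 :=
  (sq_le_one_iff₀ (norm_nonneg _)).mp (by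
    rw [norm_eval_circlePeak_sq hw hζ]; linarith [sq_nonneg ‖ζ - w‖])

theorem exists_norm_eval_circlePeak_le (hw : ‖w‖ = 1) {ρ : ℝ} (hρ : 0 < ρ) :
    ∃ θ < 1, ∀ ζ : ℂ, ‖ζ‖ = 1 → ρ ≤ ‖ζ - w‖ → ‖(circlePeak w).eval ζ‖ ≤ θ := by
  refine ⟨√(1 - ρ ^ 2 / 4), (Real.sqrt_lt' one_pos).2 (by nlinarith), fun ζ hζ hρζ => ?_⟩
  refine (le_abs_self _).trans (Real.abs_le_sqrt ?_)
  rw [norm_eval_circlePeak_sq hw hζ]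
  nlinarith

end CirclePeak

section Torus

theorem torus_eq_pi : Torus = Set.univ.pi fun _ => sphere (0 : ℂ) 1 := by
  ext z
  simp [Torus, Fin.forall_fin_two]

theorem isCompact_torus : IsCompact Torus :=
  torus_eq_pi ▸ isCompact_univ_pi fun _ => isCompact_sphere 0 1

theorem norm_le_one_of_mem_polyHull {X : Set (Fin 2 → ℂ)} (hX : X ⊆ Torus) {z : Fin 2 → ℂ}
    (hz : z ∈ polyHull X) (i : Fin 2) : ‖z i‖ ≤ 1 := by
  simpa using norm_eval_le_of_mem_polyHull hz zero_le_one (p := MvPolynomial.X i) fun w hw => by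
    fin_cases i <;> simp [(hX hw).1, (hX hw).2]

theorem exists_pos_forall_le_norm_sub_or {F : Set (Fin 2 → ℂ)} (hF : IsClosed F)
    {μ : Fin 2 → ℂ} (hμ : μ ∉ F) : ∃ ρ > 0, ∀ x ∈ F, ρ ≤ ‖x 0 - μ 0‖ ∨ ρ ≤ ‖x 1 - μ 1‖ := by
  obtain ⟨ρ, hρ, hball⟩ := Metric.isOpen_iff.mp hF.isOpen_compl μ hμ
  refine ⟨ρ, hρ, fun x hx => ?_⟩
  by_contra! h
  refine hball ((dist_pi_lt_iff hρ).2 (Fin.forall_fin_two.2 ?_)) hx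
  simpa only [dist_eq_norm] using h

/-- The peaking polynomial is `g(ζ₁) · circlePeak c (ζ₀) ^ N`, where `g` peaks at `z 1` relative
to the arc `B` of points of the circle `ρ`-far from `μ 1`, and `N` is so large that the second
factor beats `g` where `ζ₀` is `ρ`-far from `c`. -/
theorem mem_polyHull_of_fiber_gap {c : ℂ} {K C : Set (Fin 2 → ℂ)} (hK : IsCompact K)
    (hKΓ : K ⊆ Torus) (hC : IsCompact C) (hCsub : C ⊆ {z ∈ Torus | z 0 = c})
    {μ : Fin 2 → ℂ} (hμΓ : μ ∈ Torus) (hμ0 : μ 0 = c) (hμ : μ ∉ K ∪ C)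
    {z : Fin 2 → ℂ} (hz : z ∈ polyHull (K ∪ C)) (hz0 : z 0 = c)
    (hz1 : ‖z 1‖ < 1 ∨ z 1 = μ 1) : z ∈ polyHull K := by
  have hc : ‖c‖ = 1 := hμ0 ▸ hμΓ.1
  obtain ⟨ρ, hρ, hgap⟩ := exists_pos_forall_le_norm_sub_or (hK.union hC).isClosed hμ
  rw [hμ0] at hgap
  set B := sphere (0 : ℂ) 1 ∩ {ζ | ρ ≤ ‖ζ - μ 1‖}
  have hB : IsCompact B :=
    (isCompact_sphere 0 1).inter_right (isClosed_le continuous_const (by fun_prop))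
  have hμB : μ 1 ∉ B := fun h => hρ.not_ge (by simpa using h.2)
  have hzB : z 1 ∉ B := by
    rintro ⟨h1, h2⟩
    rcases hz1 with h | h
    · exact h.ne (by simpa using h1)
    · exact hρ.not_ge (by simpa [h] using h2)
  obtain ⟨g, hgz, hgB⟩ := exists_eval_eq_one_norm_eval_le hB
    (isPreconnected_compl_of_subset_sphere Set.inter_subset_left (by simpa using hμΓ.2) hμB)
    hzB (ε := 1 / 2) (by norm_num)
  have hg_near (x) (hx : x ∈ K ∪ C) (hx1 : ‖x 1‖ = 1) (hxc : ‖x 0 - c‖ < ρ) :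
      ‖g.eval (x 1)‖ ≤ 1 / 2 :=
    hgB _ ⟨by simpa using hx1, (hgap x hx).resolve_left hxc.not_ge⟩
  obtain ⟨M, hM⟩ := (isCompact_sphere (0 : ℂ) 1).exists_bound_of_continuousOn
    g.continuous.continuousOn
  obtain ⟨θ, hθ1, hθ⟩ := exists_norm_eval_circlePeak_le hc hρ
  obtain ⟨N, hN⟩ := exists_pow_lt_of_lt_one (inv_pos.2 (by positivity : 0 < max M 1)) hθ1
  refine mem_polyHull_of_peak hK hC hz
    (φ := g.toMvPolynomial 1 * (circlePeak c).toMvPolynomial 0 ^ N) (θ := 1 / 2)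
    (by norm_num) (by norm_num) (fun x hx => ?_) (fun x hx => ?_) ?_ <;>
    simp only [map_mul, map_pow, MvPolynomial.eval_toMvPolynomial, norm_mul, norm_pow]
  · obtain ⟨hx0, hx1⟩ := hKΓ hx
    by_cases hxc : ‖x 0 - c‖ < ρ
    · calc _ ≤ 1 / 2 * 1 := mul_le_mul (hg_near x (Or.inl hx) hx1 hxc)
            (pow_le_one₀ (norm_nonneg _) (norm_eval_circlePeak_le_one hc hx0))
            (by positivity) (by norm_num)
        _ ≤ 1 := by norm_num
    · calc _ ≤ max M 1 * θ ^ N := mul_le_mul ((hM _ (by simpa using hx1)).trans (le_max_left _ _))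
            (pow_le_pow_left₀ (norm_nonneg _) (hθ _ hx0 (not_lt.mp hxc)) N)
            (by positivity) (by positivity)
        _ ≤ 1 := by
          have := mul_lt_mul_of_pos_left hN (by positivity : 0 < max M 1)
          rw [mul_inv_cancel₀ (by positivity)] at this
          exact this.le
  · obtain ⟨⟨-, hx1⟩, hx0⟩ := hCsub hx
    rw [hx0, eval_circlePeak_self hc, norm_one, one_pow, mul_one]
    exact hg_near x (Or.inr hx) hx1 (by simpa [hx0] using hρ)
  · rw [hgz, hz0, eval_circlePeak_self hc]
    simp

end Torus

theorem stmt13 (c : ℂ) (hc : ‖c‖ = 1) (K : Set (Fin 2 → ℂ)) (hKΓ : K ⊆ Torus)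
    (hKcl : IsClosed K) (C : Set (Fin 2 → ℂ)) (hCsub : C ⊆ {z ∈ Torus | z 0 = c})
    (hCcl : IsClosed C) (hfull : ¬ {z ∈ Torus | z 0 = c} ⊆ K ∪ C) :
    polyHull (K ∪ C) = polyHull K ∪ C := by
  have hCΓ : C ⊆ Torus := fun x hx => (hCsub hx).1
  have hK := isCompact_torus.of_isClosed_subset hKcl hKΓ
  have hC := isCompact_torus.of_isClosed_subset hCcl hCΓ
  refine subset_antisymm (fun z hz => ?_) (Set.union_subset
    (polyHull_mono (hK.union hC) Set.subset_union_left)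
    (Set.subset_union_right.trans (subset_polyHull (hK.union hC))))
  by_cases hzC : z ∈ C
  · exact Or.inr hzC
  by_cases hzK : z ∈ K
  · exact Or.inl (subset_polyHull hK hzK)
  refine Or.inl ?_
  by_cases hz0 : z 0 = c
  · obtain ⟨μ, ⟨hμΓ, hμ0⟩, hμ, hz1⟩ : ∃ μ ∈ {z ∈ Torus | z 0 = c}, μ ∉ K ∪ C ∧
        (‖z 1‖ < 1 ∨ z 1 = μ 1) := by
      rcases (norm_le_one_of_mem_polyHull (Set.union_subset hKΓ hCΓ) hz 1).lt_or_eq with h | h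
      · obtain ⟨μ, hμ, hμKC⟩ := Set.not_subset.mp hfull
        exact ⟨μ, hμ, hμKC, Or.inl h⟩
      · exact ⟨z, ⟨⟨hz0 ▸ hc, h⟩, hz0⟩, fun h => h.elim hzK hzC, Or.inr rfl⟩
    exact mem_polyHull_of_fiber_gap hK hKΓ hC hCsub hμΓ hμ0 hμ hz hz0 hz1
  · exact mem_polyHull_of_eval_eq_zero hK hz (φ := MvPolynomial.X 0 - MvPolynomial.C c)
      (fun w hw => by simp [(hCsub hw).2]) (by simpa [sub_eq_zero] using hz0)
end

section
/- Let X be a compact Hausdorff space, let E ⊆ X be closed, and let B be a closed subalgebra of C(E,ℂ) containing the constant functions. Let A = { f ∈ C(X,ℂ) : f|_E ∈ B }. Suppose: S is a collection of functions in A such that the closure in C(E,ℂ) of the subalgebra generated by the constants and { f|_E : f ∈ S } equals B; G is a collection of real-valued continuous functions on X such that the closure in C(X,ℂ) of the subalgebra generated by the constants and G equals C(X,ℂ); and ρ ∈ C(X,ℝ) is a function whose zero set is exactly E. Then the closure in C(X,ℂ) of the subalgebra generated by the constants together with S, ρ, and { ρ·g : g ∈ G } equals A. -/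
/-!
Let `T` be the closure of the algebra generated by the constants, `S`, `ρ` and `ρ G`. Since `ρ`
is real, Weierstrass approximation puts `Γₙ = nρ / (1 + nρ²)` in `T`, and `1 - ρΓₙ = 1 / (1 + nρ²)`.
By compactness, if `|k| < ε` on `E = ρ⁻¹(0)` then `|k| / (1 + nρ²) < ε` everywhere for large `n`,
so `ρΓₙ k ∈ T` approximates `k`. Applied to `k = ρ h₁ h₂` this shows that `{h | ρ h ∈ T}` is a
closed subalgebra; it contains `G`, hence everything. Applied to `k = f - Q`, with `Q` generated by
`S` and close to `f ∈ A` on `E`, it shows `f ∈ T`.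
-/

open Polynomial

theorem ContinuousMap.mem_of_forall_exists_dist_lt {α β : Type*} [TopologicalSpace α]
    [CompactSpace α] [PseudoMetricSpace β] {s : Set C(α, β)} (hs : IsClosed s) {f : C(α, β)}
    (hf : ∀ ε > 0, ∃ g ∈ s, ∀ x, dist (f x) (g x) < ε) : f ∈ s := by
  refine hs.closure_eq ▸ Metric.mem_closure_iff.2 fun ε hε => ?_
  obtain ⟨g, hgs, hfg⟩ := hf ε hε
  exact ⟨g, hgs, (ContinuousMap.dist_lt_iff hε).2 hfg⟩

theorem exists_forall_div_one_add_mul_sq_lt {X : Type*} [TopologicalSpace X] [CompactSpace X]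
    {u ρ : X → ℝ} (hu : Continuous u) (hρ : Continuous ρ) (hu₀ : ∀ x, 0 ≤ u x) {ε : ℝ}
    (hε : 0 < ε) (huε : ∀ x, ρ x = 0 → u x < ε) :
    ∃ n : ℕ, ∀ x, u x / (1 + n * ρ x ^ 2) < ε := by
  have hpos (n : ℕ) (x : X) : 0 < 1 + n * ρ x ^ 2 := by positivity
  have hcover : Set.univ ⊆ ⋃ n : ℕ, {x | u x / (1 + n * ρ x ^ 2) < ε} := by
    intro x _
    by_cases hx : ρ x = 0
    · exact Set.mem_iUnion.2 ⟨0, by simpa [hx] using huε x hx⟩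
    obtain ⟨n, hn⟩ := exists_nat_gt (u x / (ε * ρ x ^ 2))
    refine Set.mem_iUnion.2 ⟨n, (div_lt_iff₀ (hpos n x)).2 ?_⟩
    nlinarith [(div_lt_iff₀ (by positivity)).1 hn]
  have hmono : Monotone fun n : ℕ => {x | u x / (1 + n * ρ x ^ 2) < ε} := fun m n hmn x hx =>
    lt_of_le_of_lt (div_le_div_of_nonneg_left (hu₀ x) (hpos m x) (by gcongr)) hx
  obtain ⟨n, hn⟩ := isCompact_univ.elim_directed_cover _
    (fun n => isOpen_lt (hu.div (by fun_prop) fun x => (hpos n x).ne') continuous_const)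
    hcover hmono.directed_le
  exact ⟨n, fun x => hn (Set.mem_univ x)⟩

section RealFunction

variable {X : Type*} [TopologicalSpace X] [CompactSpace X] {ρ : C(X, ℝ)} {ρC : C(X, ℂ)}
  (hρC : ∀ x, ρC x = ρ x) {T : Subalgebra ℂ C(X, ℂ)} (hT : IsClosed (T : Set C(X, ℂ)))
  (hρT : ρC ∈ T)
include hρC hT hρT

theorem exists_mem_forall_eq_ofReal_comp {g : ℝ → ℝ} (hg : Continuous g) :
    ∃ Γ ∈ T, ∀ x, Γ x = g (ρ x) := by
  refine ⟨⟨fun x => g (ρ x), by fun_prop⟩, ContinuousMap.mem_of_forall_exists_dist_lt hT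
    fun ε hε => ?_, fun x => rfl⟩
  obtain ⟨p, hp⟩ := exists_polynomial_near_of_continuousOn (-‖ρ‖) ‖ρ‖ g hg.continuousOn ε hε
  refine ⟨aeval ρC (p.map (algebraMap ℝ ℂ)),
    Algebra.adjoin_le (Set.singleton_subset_iff.2 hρT) (aeval_mem_adjoin_singleton ℂ ρC),
    fun x => ?_⟩
  have hx : ρ x ∈ Set.Icc (-‖ρ‖) ‖ρ‖ := abs_le.1 (ρ.norm_coe_le_norm x)
  rw [ContinuousMap.coe_mk, aeval_continuousMap_apply, eval_map, hρC,
    show eval₂ (algebraMap ℝ ℂ) (ρ x : ℂ) p = ((eval (ρ x) p : ℝ) : ℂ) from eval₂_at_apply _ _,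
    Complex.isometry_ofReal.dist_eq, dist_comm, Real.dist_eq]
  exact hp _ hx

theorem exists_mem_forall_dist_mul_lt {k : C(X, ℂ)} {ε : ℝ} (hε : 0 < ε)
    (hk : ∀ x, ρ x = 0 → ‖k x‖ < ε) : ∃ Γ ∈ T, ∀ x, dist (k x) (ρC x * Γ x * k x) < ε := by
  obtain ⟨n, hn⟩ := exists_forall_div_one_add_mul_sq_lt (continuous_norm.comp k.continuous)
    ρ.continuous (fun x => norm_nonneg _) hε hk
  have hpos (t : ℝ) : 0 < 1 + n * t ^ 2 := by positivity
  obtain ⟨Γ, hΓT, hΓ⟩ := exists_mem_forall_eq_ofReal_comp hρC hT hρT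
    (g := fun t => n * t / (1 + n * t ^ 2)) (by fun_prop (disch := exact fun t => (hpos t).ne'))
  refine ⟨Γ, hΓT, fun x => ?_⟩
  have hρΓ : 1 - ρC x * Γ x = ((1 + n * ρ x ^ 2)⁻¹ : ℝ) := by
    rw [hρC, hΓ, ← Complex.ofReal_mul, ← Complex.ofReal_one, ← Complex.ofReal_sub]
    congr 1
    field_simp [(hpos (ρ x)).ne']
    ring
  calc dist (k x) (ρC x * Γ x * k x) = ‖(1 - ρC x * Γ x) * k x‖ := by
        rw [dist_eq_norm]; ring_nf
    _ = ‖k x‖ / (1 + n * ρ x ^ 2) := by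
        rw [hρΓ, norm_mul, Complex.norm_real, Real.norm_of_nonneg (inv_pos.2 (hpos _)).le,
          inv_mul_eq_div]
    _ < ε := hn x

theorem mul_mul_mem_of_mul_mem {h₁ h₂ : C(X, ℂ)} (h₁T : ρC * h₁ ∈ T) (h₂T : ρC * h₂ ∈ T) :
    ρC * (h₁ * h₂) ∈ T := by
  refine ContinuousMap.mem_of_forall_exists_dist_lt hT fun ε hε => ?_
  obtain ⟨Γ, hΓT, hΓ⟩ := exists_mem_forall_dist_mul_lt hρC hT hρT hε
    (k := ρC * (h₁ * h₂)) fun x hx => by simpa [hρC, hx] using hε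
  refine ⟨Γ * (ρC * h₁) * (ρC * h₂), mul_mem (mul_mem hΓT h₁T) h₂T, fun x => ?_⟩
  convert hΓ x using 2
  simp only [ContinuousMap.mul_apply]
  ring

theorem mul_mem_of_mem_closure_adjoin {G : Set C(X, ℂ)} (hGT : ∀ g ∈ G, ρC * g ∈ T) {h : C(X, ℂ)}
    (hh : h ∈ closure (Algebra.adjoin ℂ G : Set C(X, ℂ))) : ρC * h ∈ T := by
  refine closure_minimal (fun h hh => ?_) (hT.preimage (continuous_const_mul ρC)) hh
  induction hh using Algebra.adjoin_induction with
  | mem g hg => exact hGT g hg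
  | algebraMap c =>
    change ρC * _ ∈ T
    rw [← Algebra.commutes]
    exact mul_mem (T.algebraMap_mem c) hρT
  | add h₁ h₂ _ _ h₁T h₂T =>
    change ρC * _ ∈ T
    rw [mul_add]
    exact add_mem h₁T h₂T
  | mul h₁ h₂ _ _ h₁T h₂T => exact mul_mul_mem_of_mul_mem hρC hT hρT h₁T h₂T

omit hρT in
theorem mem_of_forall_exists_dist_lt_of_eq_zero (hmul : ∀ h, ρC * h ∈ T) {f : C(X, ℂ)}
    (hf : ∀ ε > 0, ∃ Q ∈ T, ∀ x, ρ x = 0 → dist (f x) (Q x) < ε) : f ∈ T := by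
  refine ContinuousMap.mem_of_forall_exists_dist_lt hT fun ε hε => ?_
  obtain ⟨Q, hQT, hfQ⟩ := hf ε hε
  obtain ⟨Γ, -, hΓ⟩ := exists_mem_forall_dist_mul_lt hρC hT (mul_one ρC ▸ hmul 1) hε
    (k := f - Q) fun x hx => by simpa [dist_eq_norm] using hfQ x hx
  refine ⟨Q + ρC * (Γ * (f - Q)), add_mem hQT (hmul _), fun x => ?_⟩
  convert hΓ x using 1
  simp only [dist_eq_norm, ContinuousMap.add_apply, ContinuousMap.mul_apply,
    ContinuousMap.sub_apply]
  ring_nf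

end RealFunction

theorem topologicalClosure_adjoin_le_comap_restrict {X : Type*} [TopologicalSpace X]
    [CompactSpace X] {E : Set X}
    {B : Subalgebra ℂ C(E, ℂ)} (hB : IsClosed (B : Set C(E, ℂ))) {S : Set C(X, ℂ)}
    (hS : S ⊆ {f | f.restrict E ∈ B}) {ρC : C(X, ℂ)} (hρC : ∀ x ∈ E, ρC x = 0) (G : Set C(X, ℂ)) :
    (Algebra.adjoin ℂ (S ∪ {ρC} ∪ (fun g => ρC * g) '' G)).topologicalClosure ≤
      B.comap (ContinuousMap.compRightAlgHom ℂ ℂ (.restrict E (.id X))) := by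
  refine Subalgebra.topologicalClosure_minimal (Algebra.adjoin_le ?_)
    (hB.preimage (ContinuousMap.compRightAlgHom_continuous ℂ ℂ _))
  have hρE : ContinuousMap.compRightAlgHom ℂ ℂ (.restrict E (.id X)) ρC = 0 :=
    ContinuousMap.ext fun x => hρC x x.2
  rintro _ ((hs | hs) | ⟨g, -, rfl⟩)
  · exact hS hs
  · rw [Set.mem_singleton_iff.1 hs, SetLike.mem_coe, Subalgebra.mem_comap, hρE]
    exact zero_mem B
  · rw [SetLike.mem_coe, Subalgebra.mem_comap, map_mul, hρE, zero_mul]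
    exact zero_mem B

theorem stmt16_general {X : Type*} [TopologicalSpace X] [CompactSpace X]
    (E : Set X) (hE : IsClosed E)
    (B : Subalgebra ℂ C(E, ℂ)) (hBcl : IsClosed (B : Set C(E, ℂ)))
    (A : Set C(X, ℂ)) (hA : A = {f : C(X, ℂ) | f.restrict E ∈ B})
    (S : Set C(X, ℂ)) (hSA : S ⊆ A)
    (hSgen : closure ((Algebra.adjoin ℂ ((fun f : C(X, ℂ) => f.restrict E) '' S) :
        Subalgebra ℂ C(E, ℂ)) : Set C(E, ℂ)) = (B : Set C(E, ℂ)))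
    (G : Set C(X, ℂ))
    (hGgen : closure ((Algebra.adjoin ℂ G : Subalgebra ℂ C(X, ℂ)) : Set C(X, ℂ)) = Set.univ)
    (ρ : C(X, ℝ)) (hρ : ∀ x : X, ρ x = 0 ↔ x ∈ E)
    (ρC : C(X, ℂ)) (hρC : ∀ x : X, ρC x = (ρ x : ℂ)) :
    closure ((Algebra.adjoin ℂ (S ∪ {ρC} ∪ (fun g => ρC * g) '' G) :
      Subalgebra ℂ C(X, ℂ)) : Set C(X, ℂ)) = A := by
  have : CompactSpace E := isCompact_iff_compactSpace.mp hE.isCompact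
  set M := Algebra.adjoin ℂ (S ∪ {ρC} ∪ (fun g => ρC * g) '' G)
  have hST : S ⊆ M.topologicalClosure :=
    fun s hs => M.le_topologicalClosure (Algebra.subset_adjoin (.inl (.inl hs)))
  have hρT : ρC ∈ M.topologicalClosure :=
    M.le_topologicalClosure (Algebra.subset_adjoin (.inl (.inr rfl)))
  have hGT : ∀ g ∈ G, ρC * g ∈ M.topologicalClosure :=
    fun g hg => M.le_topologicalClosure (Algebra.subset_adjoin (.inr ⟨g, hg, rfl⟩))
  subst hA
  rw [← Subalgebra.topologicalClosure_coe]
  refine subset_antisymm (topologicalClosure_adjoin_le_comap_restrict hBcl hSA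
    (fun x hx => by simp [hρC, (hρ x).2 hx]) G) fun f hf => ?_
  refine mem_of_forall_exists_dist_lt_of_eq_zero hρC M.isClosed_topologicalClosure
    (fun h => mul_mem_of_mem_closure_adjoin hρC M.isClosed_topologicalClosure hρT hGT
      (hGgen ▸ Set.mem_univ h)) fun ε hε => ?_
  let r := ContinuousMap.compRightAlgHom ℂ ℂ (.restrict E (.id X))
  rw [show (fun f : C(X, ℂ) => f.restrict E) '' S = r '' S from rfl, ← AlgHom.map_adjoin] at hSgen
  have hfS : r f ∈ closure (((Algebra.adjoin ℂ S).map r : Subalgebra ℂ C(E, ℂ)) : Set C(E, ℂ)) :=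
    hSgen ▸ hf
  obtain ⟨_, ⟨Q, hQ, rfl⟩, hfQ⟩ := Metric.mem_closure_iff.1 hfS ε hε
  exact ⟨Q, Algebra.adjoin_le hST hQ,
    fun x hx => (ContinuousMap.dist_apply_le_dist ⟨x, (hρ x).1 hx⟩).trans_lt hfQ⟩

theorem stmt16 {X : Type*} [TopologicalSpace X] [CompactSpace X] [T2Space X]
    (E : Set X) (hE : IsClosed E)
    (B : Subalgebra ℂ C(E, ℂ)) (hBcl : IsClosed (B : Set C(E, ℂ)))
    (A : Set C(X, ℂ)) (hA : A = {f : C(X, ℂ) | f.restrict E ∈ B})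
    (S : Set C(X, ℂ)) (hSA : S ⊆ A)
    (hSgen : closure ((Algebra.adjoin ℂ ((fun f : C(X, ℂ) => f.restrict E) '' S) :
        Subalgebra ℂ C(E, ℂ)) : Set C(E, ℂ)) = (B : Set C(E, ℂ)))
    (G : Set C(X, ℂ)) (hGreal : ∀ g ∈ G, ∀ x : X, ∃ r : ℝ, g x = (r : ℂ))
    (hGgen : closure ((Algebra.adjoin ℂ G : Subalgebra ℂ C(X, ℂ)) : Set C(X, ℂ)) = Set.univ)
    (ρ : C(X, ℝ)) (hρ : ∀ x : X, ρ x = 0 ↔ x ∈ E)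
    (ρC : C(X, ℂ)) (hρC : ∀ x : X, ρC x = (ρ x : ℂ)) :
    closure ((Algebra.adjoin ℂ (S ∪ {ρC} ∪ (fun g => ρC * g) '' G) :
      Subalgebra ℂ C(X, ℂ)) : Set C(X, ℂ)) = A :=
  stmt16_general E hE B hBcl A hA S hSA hSgen G hGgen ρ hρ ρC hρC
end
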